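/- For each κ ∈ ℂ, the product a •_κ b = (a+b+2abκ)/(1+ab(1-κ²)) is commutative and associative where defined, and the map f(t) = sinh t / (cosh t - (sinh t)κ) satisfies the exponential law f(s) •_κ f(t) = f(s+t), whenever cosh s - (sinh s)κ ≠ 0, cosh t - (sinh t)κ ≠ 0, cosh(s+t) - (sinh(s+t))κ ≠ 0 and the denominator 1 + f(s)f(t)(1-κ²) ≠ 0. -/

import Mathlib

open Complex

/-- The broken product `a •_κ b = (a+b+2abκ)/(1+ab(1-κ²))`. -/
noncomputable def bulletK (κ a b : ℂ) : ℂ :=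
  (a + b + 2 * a * b * κ) / (1 + a * b * (1 - κ ^ 2))

/-- `f(t) = sinh t / (cosh t - (sinh t)κ)`. -/
noncomputable def expK (κ t : ℂ) : ℂ :=
  Complex.sinh t / (Complex.cosh t - Complex.sinh t * κ)

/-!
Multiplying numerator and denominator by `q * u`, the product `(p / q) •_κ (r / u)` is again a
fraction with polynomial numerator and denominator. For `(a •_κ b) •_κ c` both are symmetric in
`a, b, c`, which gives associativity; for `f(s) •_κ f(t)` the addition formulas turn them into
`sinh (s + t)` and `cosh (s + t) - sinh (s + t) * κ`.
-/

theorem bulletK_comm (κ a b : ℂ) : bulletK κ a b = bulletK κ b a := by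
  unfold bulletK
  ring

theorem bulletK_div_div {κ p q r u : ℂ} (hq : q ≠ 0) (hu : u ≠ 0) :
    bulletK κ (p / q) (r / u) =
      (p * u + r * q + 2 * p * r * κ) / (q * u + p * r * (1 - κ ^ 2)) := by
  unfold bulletK
  rw [← mul_div_mul_right _ _ (mul_ne_zero hq hu)]
  congr 1 <;> field_simp

theorem bulletK_assoc (κ a b c : ℂ) (hab : 1 + a * b * (1 - κ ^ 2) ≠ 0)
    (hbc : 1 + b * c * (1 - κ ^ 2) ≠ 0) :
    bulletK κ (bulletK κ a b) c = bulletK κ a (bulletK κ b c) := by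
  have left : bulletK κ (bulletK κ a b) c =
      bulletK κ ((a + b + 2 * a * b * κ) / (1 + a * b * (1 - κ ^ 2))) (c / 1) := by
    rw [div_one]; rfl
  have right : bulletK κ a (bulletK κ b c) =
      bulletK κ (a / 1) ((b + c + 2 * b * c * κ) / (1 + b * c * (1 - κ ^ 2))) := by
    rw [div_one]; rfl
  rw [left, right, bulletK_div_div hab one_ne_zero,
    bulletK_div_div one_ne_zero hbc]
  congr 1 <;> ring

theorem bulletK_expK_expK (κ s t : ℂ) (hs : cosh s - sinh s * κ ≠ 0)
    (ht : cosh t - sinh t * κ ≠ 0) :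
    bulletK κ (expK κ s) (expK κ t) = expK κ (s + t) := by
  unfold expK
  rw [bulletK_div_div hs ht]
  congr 1
  · rw [sinh_add]; ring
  · rw [cosh_add, sinh_add]; ring

/-- `•_κ` is commutative and associative where defined, and
`f(t) = sinh t/(cosh t - (sinh t)κ)` satisfies the exponential law. -/
theorem bulletK_comm_assoc_exp (κ : ℂ) :
    (∀ a b : ℂ, bulletK κ a b = bulletK κ b a) ∧
    (∀ a b c : ℂ, 1 + a * b * (1 - κ ^ 2) ≠ 0 → 1 + b * c * (1 - κ ^ 2) ≠ 0 →
      1 + bulletK κ a b * c * (1 - κ ^ 2) ≠ 0 →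
      1 + a * bulletK κ b c * (1 - κ ^ 2) ≠ 0 →
      bulletK κ (bulletK κ a b) c = bulletK κ a (bulletK κ b c)) ∧
    (∀ s t : ℂ,
      Complex.cosh s - Complex.sinh s * κ ≠ 0 →
      Complex.cosh t - Complex.sinh t * κ ≠ 0 →
      Complex.cosh (s + t) - Complex.sinh (s + t) * κ ≠ 0 →
      1 + expK κ s * expK κ t * (1 - κ ^ 2) ≠ 0 →
      bulletK κ (expK κ s) (expK κ t) = expK κ (s + t)) :=
  ⟨bulletK_comm κ,
    fun a b c hab hbc _ _ => bulletK_assoc κ a b c hab hbc,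
    fun s t hs ht _ _ => bulletK_expK_expK κ s t hs ht⟩
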